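/- Let d ≥ 1 and ν ≥ 3 be integers. For θ = (θ₁,…,θ_d) ∈ ℝ^d let M(θ) be the ν×ν real symmetric matrix acting on f ∈ ℂ^ν by (M(θ)f)_j = f_j − f_ν for 1 ≤ j ≤ ν−1 and (M(θ)f)_ν = (ν−1+2d − 2Σ_{s=1}^d cos θ_s) f_ν − Σ_{j=1}^{ν−1} f_j. Then, with x = (ν+4d)/2: (i) ⋃_{θ ∈ ℝ^d} spec(M(θ)) = [0, x − √(x² − 4d)] ∪ {1} ∪ [ν, x + √(x² − 4d)]; and (ii) for every θ ∈ ℝ^d, the number 1 is an eigenvalue of M(θ) of multiplicity ν − 2 (a flat band of multiplicity ν − 2). -/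

import Mathlib

open scoped BigOperators
open Matrix Polynomial

noncomputable section

/-- The fiber Laplacian `M(θ)` of the maximal abelian covering of the fundamental graph
with vertices `v₁, …, v_ν`, edges `(v_j, v_ν)` for `j < ν−1` (zero index), and `d`
loops at `v_ν` with standard basis indices:
`(M(θ)f)_j = f_j − f_ν` for `j < ν−1`,
`(M(θ)f)_ν = (ν−1+2d − 2∑ cos θ_s) f_ν − ∑_{j<ν−1} f_j`. -/
def exLap (d ν : ℕ) (θ : Fin d → ℝ) : Matrix (Fin ν) (Fin ν) ℂ :=
  fun j k =>
    if (j : ℕ) = ν - 1 then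
      if (k : ℕ) = ν - 1 then
        (((ν : ℝ) - 1 + 2 * d - 2 * ∑ s, Real.cos (θ s) : ℝ) : ℂ)
      else -1
    else
      if k = j then 1
      else if (k : ℕ) = ν - 1 then -1 else 0

/-!
Splitting off the hub vertex `v_ν`, the matrix `M(θ)` has block form `[[1, -1], [-1, c]]` with
`c = ν - 1 + 2d - 2 ∑ cos θ_s`, which ranges over `[ν - 1, ν - 1 + 4d]`. A Schur complement
gives `charpoly M(θ) = (X - 1)^(ν - 2) * ((X - 1)(X - c) - (ν - 1))`: this is the flat band at
`1`, and the other eigenvalues `t` solve `(t - 1)(t - c) = ν - 1`. As `c` sweeps its interval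
they fill two bands, whose edges are the solutions `0, ν` for `c = ν - 1` and `x ± √(x² - 4d)`
for `c = ν - 1 + 4d`.
-/

namespace Matrix

variable {R : Type*} [CommRing R] {m n : Type*} [Fintype m] [Fintype n] [DecidableEq m]
  [DecidableEq n]

/-- Left-multiplying by `[[1, 0], [-C, a]]` eliminates `C` without inverting `a`, so this holds
over any commutative ring, e.g. with `a = X - 1` in a polynomial ring. -/
theorem pow_mul_det_fromBlocks_smul_one (a : R) (B : Matrix m n R) (C : Matrix n m R)
    (D : Matrix n n R) :
    a ^ Fintype.card n * (fromBlocks (a • 1) B C D).det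
      = a ^ Fintype.card m * (a • D - C * B).det := by
  have hmul : fromBlocks 1 0 (-C) (a • 1) * fromBlocks (a • 1) B C D
      = fromBlocks (a • 1) B 0 (a • D - C * B) := by
    simp [fromBlocks_multiply, sub_eq_neg_add]
  simpa [det_fromBlocks_zero₁₂, det_fromBlocks_zero₂₁, det_smul] using congrArg det hmul

theorem charmatrix_fromBlocks_one (B : Matrix m n R) (C : Matrix n m R) (D : Matrix n n R) :
    charmatrix (fromBlocks 1 B C D) = fromBlocks ((X - 1 : R[X]) • 1) (-B.map Polynomial.C)
      (-C.map Polynomial.C) (charmatrix D) := by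
  ext (i | i) (j | j)
  · by_cases h : i = j <;> simp [h]
  · simp
  · simp
  · by_cases h : i = j <;> simp [h]

theorem pow_mul_charpoly_fromBlocks_one (B : Matrix m n R) (C : Matrix n m R)
    (D : Matrix n n R) :
    (X - 1 : R[X]) ^ Fintype.card n * (fromBlocks 1 B C D).charpoly
      = (X - 1) ^ Fintype.card m *
          ((X - 1 : R[X]) • charmatrix D - (C * B).map Polynomial.C).det := by
  rw [charpoly, charmatrix_fromBlocks_one, pow_mul_det_fromBlocks_smul_one, Matrix.neg_mul,
    Matrix.mul_neg, neg_neg, ← Matrix.map_mul]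

end Matrix

def exLapCorner (d ν : ℕ) (θ : Fin d → ℝ) : ℝ :=
  (ν : ℝ) - 1 + 2 * d - 2 * ∑ s, Real.cos (θ s)

theorem reindex_exLap (d m : ℕ) (θ : Fin d → ℝ) :
    reindex finSumFinEquiv.symm finSumFinEquiv.symm (exLap d (m + 1) θ)
      = fromBlocks 1 (of fun _ _ => -1) (of fun _ _ => -1)
          (of fun _ _ => (exLapCorner d (m + 1) θ : ℂ)) := by
  ext (i | i) (j | j)
  · simp [exLap, one_apply, Fin.ext_iff, i.is_lt.ne, j.is_lt.ne, eq_comm]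
  · simp [exLap, Fin.ext_iff, i.is_lt.ne, i.is_lt.ne']
  · simp [exLap, j.is_lt.ne]
  · simp [exLap, exLapCorner]

theorem charpoly_exLap (d m : ℕ) (θ : Fin d → ℝ) (hm : 1 ≤ m) :
    (exLap d (m + 1) θ).charpoly
      = (X - 1) ^ (m - 1) * ((X - 1) * (X - C (exLapCorner d (m + 1) θ : ℂ)) - C (m : ℂ)) := by
  have hCB : (of fun _ _ => -1 : Matrix (Fin 1) (Fin m) ℂ) *
      (of fun _ _ => -1 : Matrix (Fin m) (Fin 1) ℂ) = of fun _ _ => (m : ℂ) := by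
    ext
    simp [mul_apply]
  have h := pow_mul_charpoly_fromBlocks_one (m := Fin m) (n := Fin 1) (of fun _ _ => -1)
    (of fun _ _ => -1) (of fun _ _ => (exLapCorner d (m + 1) θ : ℂ))
  rw [← reindex_exLap, charpoly_reindex, hCB, det_unique] at h
  refine mul_left_cancel₀ (X_sub_C_ne_zero (1 : ℂ)) ?_
  rw [map_one, ← mul_assoc, ← pow_succ', Nat.sub_add_cancel hm]
  simpa using h

section RealAlgebra

variable {M D x : ℝ}

theorem quadratic_roots_bounds (hM : 0 < M) (hD : 0 ≤ D) (hx : x = (M + 1 + 4 * D) / 2) :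
    0 ≤ x ^ 2 - 4 * D ∧ 0 ≤ x - √(x ^ 2 - 4 * D) ∧ x - √(x ^ 2 - 4 * D) < 1 ∧
      M + 1 ≤ x + √(x ^ 2 - 4 * D) := by
  have hdisc : 0 ≤ x ^ 2 - 4 * D := by
    subst hx; nlinarith [sq_nonneg (M + 1 - 4 * D), mul_nonneg hD hM.le]
  set s := √(x ^ 2 - 4 * D)
  have hs : s ^ 2 = x ^ 2 - 4 * D := Real.sq_sqrt hdisc
  have hs0 : 0 ≤ s := Real.sqrt_nonneg _
  refine ⟨hdisc, ?_, ?_, ?_⟩ <;> nlinarith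

theorem exists_mem_Icc_mul_sub_eq_iff (hM : 0 < M) (hD : 0 ≤ D)
    (hx : x = (M + 1 + 4 * D) / 2) (t : ℝ) :
    (∃ c ∈ Set.Icc M (M + 4 * D), (t - 1) * (t - c) = M) ↔
      t ∈ Set.Icc 0 (x - √(x ^ 2 - 4 * D)) ∪ Set.Icc (M + 1) (x + √(x ^ 2 - 4 * D)) := by
  obtain ⟨hdisc, hr₀, hr₁, hr₂⟩ := quadratic_roots_bounds hM hD hx
  set s := √(x ^ 2 - 4 * D)
  have hs : s ^ 2 = x ^ 2 - 4 * D := Real.sq_sqrt hdisc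
  have h2x : 2 * x = M + 1 + 4 * D := by rw [hx]; ring
  -- Given `(t - 1) * (t - c) = M`, the constraints on `c` become sign conditions on
  -- `t * (t - (M + 1))` and on `(t - (x - s)) * (t - (x + s))`.
  have key : ∀ c, (t - 1) * (t - c) = M →
      (t - 1) * (c - M) = t * (t - (M + 1)) ∧
        (t - 1) * (c - (M + 4 * D)) = (t - (x - s)) * (t - (x + s)) := by
    intro c hc
    exact ⟨by linear_combination -hc, by linear_combination -hc + t * h2x + hs⟩
  constructor
  · rintro ⟨c, ⟨hcM, hcD⟩, hc⟩
    obtain ⟨h₁, h₂⟩ := key c hc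
    have ht : t ≠ 1 := by rintro rfl; linarith [hc]
    rcases ht.lt_or_gt with ht | ht
    · exact Or.inl ⟨by nlinarith, by nlinarith⟩
    · exact Or.inr ⟨by nlinarith, by nlinarith⟩
  · intro ht
    have ht₁ : t - 1 ≠ 0 := by
      rcases ht with ⟨-, ht⟩ | ⟨ht, -⟩ <;> linarith
    have hc : (t - 1) * (t - (t - M / (t - 1))) = M := by field_simp; ring
    obtain ⟨h₁, h₂⟩ := key _ hc
    refine ⟨_, ⟨?_, ?_⟩, hc⟩ <;> rcases ht with ⟨_, _⟩ | ⟨_, _⟩ <;> nlinarith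

end RealAlgebra

theorem range_sum_cos (ι : Type*) [Fintype ι] :
    Set.range (fun θ : ι → ℝ => ∑ i, Real.cos (θ i))
      = Set.Icc (-(Fintype.card ι : ℝ)) (Fintype.card ι) := by
  ext t
  constructor
  · rintro ⟨θ, rfl⟩
    constructor
    · simpa using Finset.card_nsmul_le_sum Finset.univ _ (-1) fun i _ => Real.neg_one_le_cos (θ i)
    · simpa using Finset.sum_le_card_nsmul Finset.univ _ 1 fun i _ => Real.cos_le_one (θ i)
  · rintro ⟨ht₁, ht₂⟩
    rcases (Fintype.card ι).eq_zero_or_pos with hn | hn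
    · have : IsEmpty ι := Fintype.card_eq_zero_iff.mp hn
      have ht : t = 0 := by simp only [hn, Nat.cast_zero, neg_zero] at ht₁ ht₂; linarith
      exact ⟨0, by simp [ht]⟩
    · have hn' : (0 : ℝ) < Fintype.card ι := by exact_mod_cast hn
      refine ⟨fun _ => Real.arccos (t / Fintype.card ι), ?_⟩
      dsimp only
      rw [Finset.sum_const, Finset.card_univ, nsmul_eq_mul, Real.cos_arccos
        (by rw [le_div_iff₀ hn']; linarith) (by rw [div_le_one hn']; linarith)]
      field_simp

theorem range_exLapCorner (d m : ℕ) :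
    Set.range (exLapCorner d (m + 1)) = Set.Icc (m : ℝ) (m + 4 * d) := by
  ext c
  have h := Set.ext_iff.mp (range_sum_cos (Fin d)) ((m + 2 * d - c) / 2)
  simp only [Set.mem_range, Set.mem_Icc, Fintype.card_fin] at h ⊢
  simp only [exLapCorner, Nat.cast_add, Nat.cast_one, add_sub_cancel_right]
  constructor
  · rintro ⟨θ, rfl⟩
    obtain ⟨h₁, h₂⟩ := h.mp ⟨θ, by ring⟩
    constructor <;> linarith
  · rintro ⟨h₁, h₂⟩
    obtain ⟨θ, hθ⟩ := h.mpr ⟨by linarith, by linarith⟩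
    exact ⟨θ, by rw [hθ]; ring⟩

theorem ofReal_mem_spectrum_exLap_iff {d m : ℕ} (θ : Fin d → ℝ) (hm : 2 ≤ m) (t : ℝ) :
    (t : ℂ) ∈ spectrum ℂ (exLap d (m + 1) θ) ↔
      t = 1 ∨ (t - 1) * (t - exLapCorner d (m + 1) θ) = m := by
  rw [Matrix.mem_spectrum_iff_isRoot_charpoly, charpoly_exLap d m θ (by omega), IsRoot.def]
  simp only [eval_mul, eval_pow, eval_sub, eval_X, eval_one, eval_C, mul_eq_zero,
    pow_eq_zero_iff (by omega : m - 1 ≠ 0), sub_eq_zero]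
  norm_cast

theorem rootMultiplicity_one_charpoly_exLap {d m : ℕ} (θ : Fin d → ℝ) (hm : 1 ≤ m) :
    (exLap d (m + 1) θ).charpoly.rootMultiplicity 1 = m - 1 := by
  set q : ℂ[X] := (X - 1) * (X - C (exLapCorner d (m + 1) θ : ℂ)) - C (m : ℂ)
  have hq : ¬ q.IsRoot 1 := by simpa [q] using (by omega : m ≠ 0)
  have h := rootMultiplicity_mul_X_sub_C_pow (a := (1 : ℂ)) (n := m - 1)
    (fun h : q = 0 => hq (by simp [h]))
  rwa [map_one, rootMultiplicity_eq_zero hq, zero_add, mul_comm, ← charpoly_exLap d m θ hm] at h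

theorem spectrum_of_example_laplacian_general
    {d ν : ℕ} (hν : 3 ≤ ν) (x : ℝ) (hx : x = ((ν : ℝ) + 4 * d) / 2) :
    (⋃ θ : Fin d → ℝ, {lam : ℝ | (lam : ℂ) ∈ spectrum ℂ (exLap d ν θ)})
      = Set.Icc 0 (x - Real.sqrt (x ^ 2 - 4 * d)) ∪ {1}
        ∪ Set.Icc (ν : ℝ) (x + Real.sqrt (x ^ 2 - 4 * d))
    ∧ ∀ θ : Fin d → ℝ,
        (exLap d ν θ).charpoly.rootMultiplicity (1 : ℂ) = ν - 2 := by
  obtain ⟨m, rfl⟩ : ∃ m, ν = m + 1 := ⟨ν - 1, by omega⟩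
  refine ⟨?_, fun θ => by rw [rootMultiplicity_one_charpoly_exLap θ (by omega)]; omega⟩
  ext t
  have hm : (0 : ℝ) < m := by exact_mod_cast (by omega : 0 < m)
  have hband := exists_mem_Icc_mul_sub_eq_iff (x := x) hm (Nat.cast_nonneg d)
    (by rw [hx]; push_cast; ring) t
  rw [← range_exLapCorner, Set.exists_range_iff] at hband
  simp only [Set.mem_iUnion, Set.mem_ofPred_eq,
    ofReal_mem_spectrum_exLap_iff _ (by omega : 2 ≤ m), exists_or, exists_const, hband]
  push_cast
  simp only [Set.mem_union, Set.mem_singleton_iff]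
  tauto

theorem spectrum_of_example_laplacian
    {d ν : ℕ} (hd : 1 ≤ d) (hν : 3 ≤ ν) (x : ℝ) (hx : x = ((ν : ℝ) + 4 * d) / 2) :
    (⋃ θ : Fin d → ℝ, {lam : ℝ | (lam : ℂ) ∈ spectrum ℂ (exLap d ν θ)})
      = Set.Icc 0 (x - Real.sqrt (x ^ 2 - 4 * d)) ∪ {1}
        ∪ Set.Icc (ν : ℝ) (x + Real.sqrt (x ^ 2 - 4 * d))
    ∧ ∀ θ : Fin d → ℝ,
        (exLap d ν θ).charpoly.rootMultiplicity (1 : ℂ) = ν - 2 :=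
  spectrum_of_example_laplacian_general hν x hx

end
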